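/- Let β = arctan(α) with 0 < α ≤ 1/9 and define λ₃(α) := √((1 − cot β)² + (1 − tan β)²) / |tan β + cot β|. Then λ₃(α) ≤ 4/3. -/
import Mathlib


open Real

/-- Elementary trigonometric estimate (display `ancho`): for `β = arctan α` with
`0 < α ≤ 1/9`, the scale factor
`λ₃(α) = √((1 − cot β)² + (1 − tan β)²) / |tan β + cot β|` is at most `4/3`. -/
theorem stmt10 (α : ℝ) (h0 : 0 < α) (h9 : α ≤ 1 / 9) :
    Real.sqrt ((1 - (Real.tan (Real.arctan α))⁻¹) ^ 2
        + (1 - Real.tan (Real.arctan α)) ^ 2)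
      / |Real.tan (Real.arctan α) + (Real.tan (Real.arctan α))⁻¹| ≤ 4 / 3 := by
  rw [Real.tan_arctan]
  have hi : 0 < α⁻¹ := inv_pos.mpr h0
  have habs : |α + α⁻¹| = α + α⁻¹ := abs_of_pos (by linarith)
  rw [habs, div_le_iff₀ (by linarith)]
  rw [show (4:ℝ)/3 * (α + α⁻¹) = ((4/3 * (α + α⁻¹))) from rfl]
  have h43 : (0:ℝ) ≤ 4/3 * (α + α⁻¹) := by positivity
  rw [Real.sqrt_le_iff]
  refine ⟨h43, ?_⟩
  have hmul : α * α⁻¹ = 1 := mul_inv_cancel₀ (ne_of_gt h0)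
  nlinarith [sq_nonneg (α - α⁻¹), sq_nonneg α, sq_nonneg (1 - α), mul_pos h0 hi]
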